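/- arXiv:2605.26024 — 2 statements merged into one kernel-verified Lean document; each statement's English description precedes it below -/
import Mathlib

section
/- For 𝔰 = su(2)-forms valued in a quadratic Lie algebra 𝔤, the transferred L∞ brackets on the cohomology H(Λ^• su(2)*)⊗𝔤 from the canonical SDR have only a binary bracket: all transferred brackets l_n with n ≥ 3 vanish, because in every transfer tree the homotopy k must act on a wedge product of invariant forms, which is again invariant and hence annihilated by k. -/
/-- Planar binary trees with leaves labelled by elements of `W`, indexing the
summands of the transferred `L∞`-brackets in homotopy transfer. -/
inductive LTree (W : Type) : Type
  | leaf (w : W) : LTree W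
  | node (l r : LTree W) : LTree W

namespace LTree

/-- Number of leaves (= arity of the corresponding transferred bracket). -/
def numLeaves {W : Type} : LTree W → ℕ
  | leaf _ => 1
  | node l r => numLeaves l + numLeaves r

/-- Evaluation of a subtree in the homotopy transfer formulas: leaves are
decorated by the inclusion `e`, internal vertices by the Lie bracket `β`, and
each internal edge by the homotopy `k`. -/
def innerEval {W E : Type} (e : W → E) (k : E → E) (β : E → E → E) :
    LTree W → E
  | leaf w => e w
  | node l r => k (β (innerEval e k β l) (innerEval e k β r))

end LTree

/-- For `su(2)`-forms valued in a quadratic Lie algebra `𝔤`, i.e. the dg Lie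
algebra `E = Λ^• su(2)* ⊗ 𝔤` with bracket `β` given by wedge product and Lie
bracket, the transferred `L∞` brackets on the cohomology
`W = H(Λ^• su(2)*) ⊗ 𝔤` have only a binary bracket: since the inclusion `e` of
invariant forms has image closed under the bracket (`hclosed`, wedge of
invariant forms being invariant) and the homotopy `k` annihilates it (`hke`),
every transfer tree with at least one internal edge — hence every `l_n` with
`n ≥ 3` — vanishes. -/
theorem su2_transferred_Linfty_brackets_vanish
    {E W : Type} [AddCommGroup E] [Module ℂ E] [AddCommGroup W] [Module ℂ W]
    (β : E →ₗ[ℂ] E →ₗ[ℂ] E)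
    (e : W →ₗ[ℂ] E) (p : E →ₗ[ℂ] W) (k : E →ₗ[ℂ] E)
    (hclosed : ∀ w₁ w₂ : W, ∃ w : W, β (e w₁) (e w₂) = e w)
    (hke : ∀ w : W, k (e w) = 0)
    (t₁ t₂ : LTree W)
    (hn : 3 ≤ t₁.numLeaves + t₂.numLeaves) :
    p (β (LTree.innerEval (⇑e) (⇑k) (fun a b => β a b) t₁)
        (LTree.innerEval (⇑e) (⇑k) (fun a b => β a b) t₂)) = 0 := by
  set f : LTree W → E := LTree.innerEval (⇑e) (⇑k) (fun a b => β a b) with hf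
  have key : ∀ t : LTree W, (f t = 0) ∨ ∃ w, f t = e w := by
    intro t
    induction t with
    | leaf w => exact Or.inr ⟨w, rfl⟩
    | node l r hl hr =>
      left
      show k (β (f l) (f r)) = 0
      rcases hl with h | ⟨w₁, h₁⟩
      · simp [h]
      rcases hr with h | ⟨w₂, h₂⟩
      · simp [h]
      obtain ⟨w, hw⟩ := hclosed w₁ w₂
      rw [h₁, h₂, hw, hke]
  have node0 : ∀ t : LTree W, 2 ≤ t.numLeaves → f t = 0 := by
    intro t ht
    cases t with
    | leaf w => simp [LTree.numLeaves] at ht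
    | node l r =>
      show k (β (f l) (f r)) = 0
      rcases key l with h | ⟨w₁, h₁⟩
      · simp [h]
      rcases key r with h | ⟨w₂, h₂⟩
      · simp [h]
      obtain ⟨w, hw⟩ := hclosed w₁ w₂
      rw [h₁, h₂, hw, hke]
  have leaf1 : ∀ t : LTree W, 1 ≤ t.numLeaves := by
    intro t
    induction t with
    | leaf w => simp [LTree.numLeaves]
    | node l r hl hr => simp only [LTree.numLeaves]; omega
  rcases le_or_gt 2 t₁.numLeaves with h | h
  · rw [show f t₁ = 0 from node0 t₁ h]; simp
  · have h2 : 2 ≤ t₂.numLeaves := by have := leaf1 t₁; omega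
    rw [show f t₂ = 0 from node0 t₂ h2]; simp
end

section
/- For the standard cross product structure: given one-dimensional I = ℂ⟨e³⟩ with I^⊥ = ℂ⟨e¹,e²⟩, all transferred products of arity ≥ 4 in the homotopy transfer vanish; concretely, for any a₁,...,a₄ ∈ I^⊥, every full bracketing of a₁,...,a₄ using the cross product with at least two nested applications where intermediate results passing through an internal edge must lie in I^⊥ evaluates to an element of I × I^⊥ ∪ I^⊥ × I ⊆ I^⊥ whose further product with an I^⊥ element lies in I, and one application of the projection to I^⊥ of an element of I gives zero; in particular ((a×b)×c)×d projected to I^⊥ plus all tree combinations with internal homotopy insertions that require crossing from I^⊥ through I and back sum to an expression where the quadruple transferred product m₄(a,b,c,d) = 0. -/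
noncomputable section

/-- The plane `I^⊥ = ℂ⟨e¹, e²⟩ ⊂ ℂ³`. -/
def Iperp : Submodule ℂ (Fin 3 → ℂ) :=
  Submodule.span ℂ ({Pi.single 0 1, Pi.single 1 1} : Set (Fin 3 → ℂ))

/-- The homotopy operator (in the identification of the relevant degrees with
`ℂ³`): the identity on `I = ℂ⟨e³⟩` and zero on `I^⊥`. -/
def kI : (Fin 3 → ℂ) → (Fin 3 → ℂ) := fun v => Pi.single 2 (v 2)

/-- The projection onto `I^⊥`. -/
def pPerp : (Fin 3 → ℂ) → (Fin 3 → ℂ) := fun v i => if i = 2 then 0 else v i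

lemma Iperp_two {v : Fin 3 → ℂ} (hv : v ∈ Iperp) : v 2 = 0 := by
  induction hv using Submodule.span_induction with
  | mem x hx => rcases hx with h | h <;> subst h <;> simp [Pi.single_eq_of_ne]
  | zero => simp
  | add x y _ _ hx hy => simp [hx, hy]
  | smul r x _ hx => simp [hx]

/-- For the partial homotopy transfer with one-dimensional `I = ℂ⟨e³⟩`, using
`I × I = 0`, `I^⊥ × I ⊆ I^⊥`, `I^⊥ × I^⊥ ⊆ I`: on inputs from `I^⊥`, each of
the five binary trees with 4 leaves (internal edges decorated by the homotopy
`kI`, vertices by the cross product, root by the projection `pPerp`)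
evaluates to zero, and hence the transferred quadruple product
`m₄(a,b,c,d) = 0`. -/
theorem transferred_m4_vanishes (a b c d : Fin 3 → ℂ)
    (ha : a ∈ Iperp) (hb : b ∈ Iperp) (hc : c ∈ Iperp) (hd : d ∈ Iperp) :
    pPerp (crossProduct (kI (crossProduct (kI (crossProduct a b)) c)) d) = 0 ∧
    pPerp (crossProduct (kI (crossProduct a b)) (kI (crossProduct c d))) = 0 ∧
    pPerp (crossProduct (kI (crossProduct a (kI (crossProduct b c)))) d) = 0 ∧
    pPerp (crossProduct a (kI (crossProduct (kI (crossProduct b c)) d))) = 0 ∧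
    pPerp (crossProduct a (kI (crossProduct b (kI (crossProduct c d))))) = 0 ∧
    pPerp (crossProduct (kI (crossProduct (kI (crossProduct a b)) c)) d) +
      pPerp (crossProduct (kI (crossProduct a b)) (kI (crossProduct c d))) +
      pPerp (crossProduct (kI (crossProduct a (kI (crossProduct b c)))) d) +
      pPerp (crossProduct a (kI (crossProduct (kI (crossProduct b c)) d))) +
      pPerp (crossProduct a (kI (crossProduct b (kI (crossProduct c d))))) = 0 := by
  have ha2 := Iperp_two ha
  have hb2 := Iperp_two hb
  have hc2 := Iperp_two hc
  have hd2 := Iperp_two hd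
  refine ⟨?_, ?_, ?_, ?_, ?_, ?_⟩ <;>
    · funext i
      fin_cases i <;>
        simp [pPerp, kI, cross_apply, Pi.single, Function.update, ha2, hb2, hc2, hd2]
end
end
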